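/- arXiv:2208.12137 — 4 statements merged into one kernel-verified Lean document; each statement's English description precedes it below -/
import Mathlib

section
/- Let (A,m) be a commutative Noetherian local ring and let X be a bounded complex of finitely generated free A-modules. Suppose that for every endomorphism u of X in the homotopy category K^b(proj A) and every r ∈ m there exists n with r^n u = 0 (i.e., the endomorphism ring of X is m-power torsion). Then every cohomology module H^i(X) has finite length. -/
/-!
Applied to `u = 𝟙 X`, the hypothesis says that every `r ∈ m` has a power acting on `X` by a
null-homotopic map, hence by zero on each `H^i(X)`. So the annihilator of the finitely generated
module `H^i(X)` has radical `m`; the quotient of `A` by it is then a Noetherian ring of dimension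
zero, i.e. Artinian, and a finite module over an Artinian ring has finite length.
-/

open CategoryTheory Limits

theorem IsLocalRing.isFiniteLength_of_maximalIdeal_le_radical_annihilator
    {A M : Type*} [CommRing A] [IsNoetherianRing A] [IsLocalRing A]
    [AddCommGroup M] [Module A M] [Module.Finite A M]
    (h : IsLocalRing.maximalIdeal A ≤ (Module.annihilator A M).radical) :
    IsFiniteLength A M := by
  nontriviality M
  set I := Module.annihilator A M
  have hI : I ≠ ⊤ := (Module.annihilator_eq_top_iff.not).mpr (not_subsingleton M)
  have hrad : I.radical = IsLocalRing.maximalIdeal A :=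
    le_antisymm (IsLocalRing.le_maximalIdeal (Ideal.radical_eq_top.not.mpr hI)) h
  have hmin : IsLocalRing.maximalIdeal A ∈ I.minimalPrimes := by
    rw [← Ideal.radical_minimalPrimes, hrad, Ideal.minimalPrimes_eq_subsingleton_self]
    rfl
  have := IsLocalRing.quotient_artinian_of_mem_minimalPrimes_of_isLocalRing I hmin
  let := Module.quotientAnnihilator (R := A) (M := M)
  have : Module.Finite (A ⧸ I) M := Module.Finite.of_restrictScalars_finite A (A ⧸ I) M
  have : IsArtinian A M :=
    isArtinian_of_surjective_algebraMap (R := A ⧸ I) Ideal.Quotient.mk_surjective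
  exact isFiniteLength_iff_isNoetherian_isArtinian.mpr ⟨inferInstance, this⟩

theorem ModuleCat.mem_annihilator_of_smul_id_eq_zero {A : Type*} [CommRing A] {M : ModuleCat A}
    {r : A} (h : r • 𝟙 M = 0) : r ∈ Module.annihilator A M :=
  Module.mem_annihilator.mpr fun x => by
    simpa only [ModuleCat.hom_smul, ModuleCat.hom_id, LinearMap.smul_apply, LinearMap.id_apply,
      ModuleCat.hom_zero, LinearMap.zero_apply] using congr(($h).hom x)

namespace HomologicalComplex

variable {ι : Type*} {c : ComplexShape ι}

theorem homologyMap_smul {R C : Type*} [Ring R] [Category C] [Preadditive C] [Linear R C]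
    {K L : HomologicalComplex C c} (r : R) (f : K ⟶ L) (i : ι)
    [K.HasHomology i] [L.HasHomology i] :
    homologyMap (r • f) i = r • homologyMap f i :=
  ShortComplex.homologyMap_smul ((shortComplexFunctor C c i).map f) r

theorem smul_id_homology_eq_zero {R C : Type*} [Ring R] [Category C] [Preadditive C] [Linear R C]
    [CategoryWithHomology C] {K : HomologicalComplex C c} {r : R}
    (h : r • 𝟙 ((HomotopyCategory.quotient C c).obj K) = 0) (i : ι) :
    r • 𝟙 (K.homology i) = 0 := by
  have hq : (HomotopyCategory.quotient C c).map (r • 𝟙 K) =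
      (HomotopyCategory.quotient C c).map 0 := by
    rwa [Functor.map_smul, Functor.map_zero, CategoryTheory.Functor.map_id]
  simpa [homologyMap_smul] using (HomotopyCategory.homotopyOfEq _ _ hq).homologyMap_eq i

theorem finite_homology {A : Type*} [CommRing A] [IsNoetherianRing A]
    (K : HomologicalComplex (ModuleCat A) c) (i : ι) [∀ j, Module.Finite A (K.X j)] :
    Module.Finite A (K.homology i) := by
  have : IsNoetherian A (K.cycles i) :=
    isNoetherian_of_injective (K.iCycles i).hom
      ((ModuleCat.mono_iff_injective _).mp inferInstance)
  exact Module.Finite.of_surjective (K.homologyπ i).hom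
    ((ModuleCat.epi_iff_surjective _).mp inferInstance)

end HomologicalComplex

theorem finite_length_cohomology_of_torsion_endomorphisms_general
    (A : Type) [CommRing A] [IsNoetherianRing A] [IsLocalRing A]
    (X : CochainComplex (ModuleCat.{0} A) ℤ)
    (hfg : ∀ i : ℤ, Module.Finite A (X.X i))
    (htor : ∀ u : ((HomotopyCategory.quotient (ModuleCat.{0} A) (ComplexShape.up ℤ)).obj X ⟶
        (HomotopyCategory.quotient (ModuleCat.{0} A) (ComplexShape.up ℤ)).obj X),
      ∀ r ∈ IsLocalRing.maximalIdeal A, ∃ n : ℕ, (r ^ n) • u = 0) :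
    ∀ i : ℤ, IsFiniteLength A (X.homology i) := by
  intro i
  have := hfg
  have := X.finite_homology i
  refine IsLocalRing.isFiniteLength_of_maximalIdeal_le_radical_annihilator fun r hr => ?_
  obtain ⟨n, hn⟩ := htor (𝟙 _) r hr
  exact ⟨n, ModuleCat.mem_annihilator_of_smul_id_eq_zero
    (HomologicalComplex.smul_id_homology_eq_zero hn i)⟩

/-- Let `(A, m)` be a commutative Noetherian local ring and `X` a bounded
complex of finitely generated free `A`-modules. If every endomorphism `u` of `X` in the
homotopy category `K^b(proj A)` is `m`-power torsion (for every `r ∈ m` there is `n` with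
`r ^ n • u = 0`), then every cohomology module of `X` has finite length. -/
theorem finite_length_cohomology_of_torsion_endomorphisms
    (A : Type) [CommRing A] [IsNoetherianRing A] [IsLocalRing A]
    (X : CochainComplex (ModuleCat.{0} A) ℤ)
    (hbdd : ∃ a b : ℤ, ∀ i : ℤ, (i < a ∨ b < i) → IsZero (X.X i))
    (hfg : ∀ i : ℤ, Module.Finite A (X.X i))
    (hfree : ∀ i : ℤ, Module.Free A (X.X i))
    (htor : ∀ u : ((HomotopyCategory.quotient (ModuleCat.{0} A) (ComplexShape.up ℤ)).obj X ⟶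
        (HomotopyCategory.quotient (ModuleCat.{0} A) (ComplexShape.up ℤ)).obj X),
      ∀ r ∈ IsLocalRing.maximalIdeal A, ∃ n : ℕ, (r ^ n) • u = 0) :
    ∀ i : ℤ, IsFiniteLength A (X.homology i) :=
  finite_length_cohomology_of_torsion_endomorphisms_general A X hfg htor
end

section
/- Let A be a commutative Noetherian ring and let U be a bounded complex of finitely generated projective A-modules whose total cohomology H^*(U) has finite length. Then the dual complex U^* = Hom_A(U, A) also has cohomology of finite length. -/
/-!
If `a` annihilates `H^i(U)`, then `a • z` is a coboundary for every cocycle `z` of degree `i`.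
Using that the `U^i` are projective, this builds, descending from the top degree `b` of `U`, maps
`s` with `(a_b ⋯ a_{k+1}) • 𝟙 = d s + s d` in all degrees above `k`, where `a_i ∈ Ann H^i(U)`.
Composing with these maps shows that the product ideal `∏ Ann H^i(U)` annihilates `H^n(U^*)`.
Each `A ⧸ Ann H^i(U)` has finite length, hence so has `A` modulo their product, and `H^n(U^*)` is
a finitely generated module over the Noetherian ring `A`, so it has finite length.
-/

open CategoryTheory Limits

section
variable (A : Type) [CommRing A]

/-- The dual of a cochain complex `X` of `A`-modules: `(X^*)^n = Hom_A(X^{-n}, A)`, with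
differential given by precomposition with the differential of `X`. -/
noncomputable def dualComplex (X : CochainComplex (ModuleCat.{0} A) ℤ) :
    CochainComplex (ModuleCat.{0} A) ℤ :=
  CochainComplex.of (fun n => ModuleCat.of A (X.X (-n) →ₗ[A] A))
    (fun n => ModuleCat.ofHom (LinearMap.lcomp A A (X.d (-(n + 1)) (-n)).hom))
    (fun n => by
      ext f x
      have h2 : X.d (-(n + 1)) (-n) (X.d (-(n + 1 + 1)) (-(n + 1)) x) = 0 := by
        rw [show (X.d (-(n + 1)) (-n)) ((X.d (-(n + 1 + 1)) (-(n + 1))) x) =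
          (X.d (-(n + 1 + 1)) (-(n + 1)) ≫ X.d (-(n + 1)) (-n)) x from rfl,
          X.d_comp_d]
        rfl
      let g : ↑(X.X (-n)) →ₗ[A] A := f
      show g (X.d (-(n + 1)) (-n) (X.d (-(n + 1 + 1)) (-(n + 1)) x)) = (0 : A)
      rw [h2, map_zero])

end

universe u v

theorem Module.Projective.exists_comp_eq_of_range_le {R P M N : Type*} [Semiring R]
    [AddCommMonoid P] [AddCommMonoid M] [AddCommMonoid N] [Module R P] [Module R M] [Module R N]
    [Module.Projective R P] (f : M →ₗ[R] N) (g : P →ₗ[R] N)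
    (h : LinearMap.range g ≤ LinearMap.range f) : ∃ σ : P →ₗ[R] M, f ∘ₗ σ = g := by
  obtain ⟨σ, hσ⟩ := Module.projective_lifting_property f.rangeRestrict
    (g.codRestrict _ fun x => h ⟨x, rfl⟩) f.surjective_rangeRestrict
  exact ⟨σ, LinearMap.ext fun x => congrArg Subtype.val (LinearMap.congr_fun hσ x)⟩

section Artinian

variable {A M : Type*} [CommRing A] [AddCommGroup M] [Module A M]

open scoped Pointwise in
theorem Ideal.prod_le_of_forall_prod_mem {ι : Type*} (s : Finset ι) (I : ι → Ideal A)
    (K : Ideal A) (h : ∀ a : ι → A, (∀ i ∈ s, a i ∈ I i) → ∏ i ∈ s, a i ∈ K) :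
    ∏ i ∈ s, I i ≤ K := by
  have hspan : ∏ i ∈ s, I i = Ideal.span (∏ i ∈ s, (I i : Set A)) := by
    rw [← Ideal.prod_span]
    simp only [Ideal.span_eq]
  rw [hspan, Ideal.span_le]
  intro x hx
  obtain ⟨a, ha, rfl⟩ := (Set.mem_finsetProd _ _ _).1 hx
  exact h a fun i hi => ha hi

theorem IsArtinian.of_le_annihilator [Module.Finite A M] {J : Ideal A} [IsArtinian A (A ⧸ J)]
    (hJ : J ≤ Module.annihilator A M) : IsArtinian A M := by
  let _ := ((Module.isTorsionBySet_iff_subset_annihilator _ _).2 hJ).module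
  have : IsArtinianRing (A ⧸ J) := isArtinian_of_tower A ‹_›
  have : Module.Finite (A ⧸ J) M := Module.Finite.of_restrictScalars_finite A _ M
  exact isArtinian_of_surjective_algebraMap (R := A ⧸ J) Ideal.Quotient.mk_surjective

theorem isArtinian_quotient_annihilator [Module.Finite A M] [IsArtinian A M] :
    IsArtinian A (A ⧸ Module.annihilator A M) := by
  obtain ⟨s, hs⟩ := Module.Finite.fg_top (R := A) (M := M)
  let φ := LinearMap.pi fun g : (s : Set M) => LinearMap.toSpanSingleton A M g
  have hker : LinearMap.ker φ = Module.annihilator A M := by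
    rw [LinearMap.ker_pi, ← Submodule.annihilator_span, hs, Submodule.annihilator_top]
  rw [← hker]
  exact isArtinian_of_linearEquiv φ.quotKerEquivRange.symm

theorem isArtinian_quotient_mul [IsNoetherianRing A] {I J : Ideal A} [IsArtinian A (A ⧸ I)]
    [IsArtinian A (A ⧸ J)] : IsArtinian A (A ⧸ I * J) := by
  let N : Submodule A (A ⧸ I * J) := Submodule.map (I * J).mkQ I
  have hN : J ≤ Module.annihilator A N := by
    intro x hx
    rw [Module.mem_annihilator]
    rintro ⟨_, y, hy, rfl⟩
    ext
    change Submodule.Quotient.mk (x • y) = (0 : A ⧸ I * J)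
    rw [Submodule.Quotient.mk_eq_zero, smul_eq_mul, mul_comm x]
    exact Ideal.mul_mem_mul hy hx
  have := IsArtinian.of_le_annihilator hN
  have := isArtinian_of_linearEquiv
    (Submodule.quotientQuotientEquivQuotient (I * J) I Ideal.mul_le_left).symm
  exact (isArtinian_iff_submodule_quotient N).2 ⟨‹_›, ‹_›⟩

theorem isArtinian_quotient_prod [IsNoetherianRing A] {ι : Type*} (s : Finset ι)
    (I : ι → Ideal A) (h : ∀ i ∈ s, IsArtinian A (A ⧸ I i)) :
    IsArtinian A (A ⧸ ∏ i ∈ s, I i) := by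
  refine Finset.prod_induction I (fun J => IsArtinian A (A ⧸ J))
    (fun _ _ _ _ => isArtinian_quotient_mul) ?_ h
  rw [Ideal.one_eq_top]
  infer_instance

end Artinian

variable {A : Type u} [CommRing A]

namespace CategoryTheory.ShortComplex

theorem mem_annihilator_homology_iff (S : ShortComplex (ModuleCat.{v} A)) (a : A) :
    a ∈ Module.annihilator A S.homology ↔
      ∀ z : S.X₂, S.g.hom z = 0 → a • z ∈ LinearMap.range S.f.hom := by
  rw [S.moduleCatHomologyIso.toLinearEquiv.annihilator_eq]
  change a ∈ Module.annihilator A (LinearMap.ker S.g.hom ⧸ LinearMap.range S.moduleCatToCycles) ↔ _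
  rw [Module.mem_annihilator]
  constructor
  · intro h z hz
    have hz' := h (Submodule.Quotient.mk ⟨z, hz⟩)
    rw [← Submodule.Quotient.mk_smul, Submodule.Quotient.mk_eq_zero] at hz'
    obtain ⟨w, hw⟩ := hz'
    exact ⟨w, congrArg Subtype.val hw⟩
  · intro h m
    induction m using Submodule.Quotient.induction_on with | H z => ?_
    obtain ⟨w, hw⟩ := h z z.2
    rw [← Submodule.Quotient.mk_smul, Submodule.Quotient.mk_eq_zero]
    exact ⟨w, Subtype.ext hw⟩

instance isNoetherian_homology (S : ShortComplex (ModuleCat.{v} A)) [IsNoetherian A S.X₂] :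
    IsNoetherian A S.homology :=
  have : IsNoetherian A S.moduleCatLeftHomologyData.H :=
    inferInstanceAs (IsNoetherian A (LinearMap.ker S.g.hom ⧸ LinearMap.range S.moduleCatToCycles))
  isNoetherian_of_linearEquiv S.moduleCatHomologyIso.toLinearEquiv.symm

end CategoryTheory.ShortComplex

instance HomologicalComplex.isNoetherian_homology {ι : Type*} {c : ComplexShape ι}
    (K : HomologicalComplex (ModuleCat.{v} A) c) (i : ι) [IsNoetherian A (K.X i)] :
    IsNoetherian A (K.homology i) :=
  have : IsNoetherian A (K.sc i).X₂ := ‹IsNoetherian A (K.X i)›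
  inferInstanceAs (IsNoetherian A (K.sc i).homology)

namespace CochainComplex

theorem mem_annihilator_homology_iff (U : CochainComplex (ModuleCat.{v} A) ℤ) {i' i i'' : ℤ}
    (h : i' + 1 = i) (h' : i + 1 = i'') (a : A) :
    a ∈ Module.annihilator A (U.homology i) ↔
      ∀ z : U.X i, (U.d i i'').hom z = 0 → a • z ∈ LinearMap.range (U.d i' i).hom := by
  rw [(U.homologyIsoSc' i' i i'' (by simp; omega) (by simp; omega)).toLinearEquiv.annihilator_eq]
  exact (U.sc' i' i i'').mem_annihilator_homology_iff a

/-- `s` is a homotopy from `c • 𝟙` to `0` in the degrees `i > k`. The neighbouring degrees `i'`,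
`i''` are separate variables so that no casts between `U.X (i + 1 - 1)` and `U.X i` arise. -/
def IsNullHomotopicSMulAbove (U : CochainComplex (ModuleCat.{v} A) ℤ) (c : A) (k : ℤ) : Prop :=
  ∃ s : ∀ i j : ℤ, U.X i →ₗ[A] U.X j, ∀ i' i i'' : ℤ, i' + 1 = i → i + 1 = i'' → k < i →
    c • LinearMap.id = (U.d i' i).hom ∘ₗ s i i' + s i'' i ∘ₗ (U.d i i'').hom

variable {U : CochainComplex (ModuleCat.{v} A) ℤ}

theorem isNullHomotopicSMulAbove_of_isZero {k : ℤ} (hU : ∀ i, k < i → IsZero (U.X i)) (c : A) :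
    U.IsNullHomotopicSMulAbove c k := by
  refine ⟨fun _ _ => 0, fun i' i i'' _ _ hi => ?_⟩
  have hid : (LinearMap.id : U.X i →ₗ[A] U.X i) = 0 :=
    congrArg ModuleCat.Hom.hom ((hU i hi).eq_of_src (𝟙 _) 0)
  simp [hid]

theorem IsNullHomotopicSMulAbove.mul_of_mem_annihilator {c a : A} {k : ℤ}
    (h : U.IsNullHomotopicSMulAbove c k) [Module.Projective A (U.X k)]
    (ha : a ∈ Module.annihilator A (U.homology k)) :
    U.IsNullHomotopicSMulAbove (c * a) (k - 1) := by
  obtain ⟨s, hs⟩ := h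
  -- `ψ` takes values in the cocycles, so `a • ψ` lifts through `d` since `U.X k` is projective.
  set ψ : U.X k →ₗ[A] U.X k := c • LinearMap.id - s (k + 1) k ∘ₗ (U.d k (k + 1)).hom with hψ
  have hψ_cocycle : ∀ x, (U.d k (k + 1)).hom (ψ x) = 0 := by
    intro x
    have hdd : (U.d (k + 1) (k + 1 + 1)).hom ((U.d k (k + 1)).hom x) = 0 :=
      congrArg (fun f => f.hom x) (U.d_comp_d k (k + 1) (k + 1 + 1))
    have hx := LinearMap.congr_fun (hs k (k + 1) (k + 1 + 1) rfl rfl (by omega))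
      ((U.d k (k + 1)).hom x)
    simp only [LinearMap.smul_apply, LinearMap.id_apply, LinearMap.add_apply,
      LinearMap.comp_apply, hdd, map_zero, add_zero] at hx
    simp [hψ, hx]
  obtain ⟨σ, hσ⟩ := Module.Projective.exists_comp_eq_of_range_le (U.d (k - 1) k).hom (a • ψ) <| by
    rintro _ ⟨x, rfl⟩
    exact (U.mem_annihilator_homology_iff (sub_add_cancel k 1) rfl a).1 ha (ψ x) (hψ_cocycle x)
  refine ⟨Function.update (fun i j => a • s i j) k
      (Function.update (fun j => a • s k j) (k - 1) σ), fun i' i i'' h₁ h₂ hi => ?_⟩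
  rcases (show i = k ∨ k < i by omega) with rfl | hki
  · obtain rfl : i' = i - 1 := by omega
    subst h₂
    rw [Function.update_self, Function.update_self, Function.update_of_ne (by omega : i + 1 ≠ i),
      hσ, LinearMap.smul_comp, hψ, smul_sub, sub_add_cancel, smul_smul, mul_comm]
  · rw [Function.update_of_ne (by omega : i ≠ k), Function.update_of_ne (by omega : i'' ≠ k),
      LinearMap.comp_smul, LinearMap.smul_comp, ← smul_add, ← hs i' i i'' h₁ h₂ hki, smul_smul,
      mul_comm]

theorem isNullHomotopicSMulAbove_prod {b : ℤ} (hU : ∀ i, b < i → IsZero (U.X i))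
    (hproj : ∀ i, Module.Projective A (U.X i)) (a : ℕ → A) (t : ℕ)
    (ha : ∀ r ∈ Finset.range t, a r ∈ Module.annihilator A (U.homology (b - r))) :
    U.IsNullHomotopicSMulAbove (∏ r ∈ Finset.range t, a r) (b - t) := by
  induction t with
  | zero => exact isNullHomotopicSMulAbove_of_isZero (by simpa using hU) _
  | succ t ih =>
    have := hproj (b - t)
    rw [Finset.prod_range_succ, Nat.cast_succ, ← sub_sub]
    exact (ih fun r hr => ha r (Finset.range_mono t.le_succ hr)).mul_of_mem_annihilator
      (ha t (Finset.self_mem_range_succ t))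

theorem dualComplex_d {A : Type} [CommRing A] (U : CochainComplex (ModuleCat.{0} A) ℤ) (n : ℤ) :
    (dualComplex A U).d n (n + 1) =
      ModuleCat.ofHom (LinearMap.lcomp A A (U.d (-(n + 1)) (-n)).hom) :=
  of_d (fun n => ModuleCat.of A (U.X (-n) →ₗ[A] A))
    (fun n => ModuleCat.ofHom (LinearMap.lcomp A A (U.d (-(n + 1)) (-n)).hom)) n

theorem IsNullHomotopicSMulAbove.mem_annihilator_homology_dualComplex {A : Type} [CommRing A]
    {U : CochainComplex (ModuleCat.{0} A) ℤ} {c : A} {k : ℤ}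
    (h : U.IsNullHomotopicSMulAbove c k) {n : ℤ} (hn : k < -n) :
    c ∈ Module.annihilator A ((dualComplex A U).homology n) := by
  obtain ⟨s, hs⟩ := h
  obtain ⟨p, rfl⟩ : ∃ p, n = p + 1 := ⟨n - 1, by ring⟩
  rw [(dualComplex A U).mem_annihilator_homology_iff rfl rfl]
  intro f hf
  let F : U.X (-(p + 1)) →ₗ[A] A := f
  have hF : F ∘ₗ (U.d (-(p + 1 + 1)) (-(p + 1))).hom = 0 := by
    rw [dualComplex_d] at hf
    exact hf
  refine ⟨F ∘ₗ s (-p) (-(p + 1)), ?_⟩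
  rw [dualComplex_d]
  change F ∘ₗ s (-p) (-(p + 1)) ∘ₗ (U.d (-(p + 1)) (-p)).hom = c • F
  have hFs := congrArg (F ∘ₗ ·) (hs (-(p + 1 + 1)) (-(p + 1)) (-p) (by ring) (by ring) hn)
  simp only [LinearMap.comp_smul, LinearMap.comp_id, LinearMap.comp_add, ← LinearMap.comp_assoc,
    hF, LinearMap.zero_comp, zero_add] at hFs
  exact hFs.symm

end CochainComplex

variable (A : Type) [CommRing A]

/-- if `U` is a bounded complex of finitely generated projective modules over
a commutative Noetherian ring `A` whose cohomology has finite length, then the cohomology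
of the dual complex `U^* = Hom_A(U, A)` also has finite length. -/
theorem dual_complex_finite_length_cohomology
    [IsNoetherianRing A]
    (U : CochainComplex (ModuleCat.{0} A) ℤ)
    (hbdd : ∃ a b : ℤ, ∀ i : ℤ, (i < a ∨ b < i) → IsZero (U.X i))
    (hfg : ∀ i : ℤ, Module.Finite A (U.X i))
    (hproj : ∀ i : ℤ, Module.Projective A (U.X i))
    (hfl : ∀ i : ℤ, IsFiniteLength A (U.homology i)) :
    ∀ n : ℤ, IsFiniteLength A ((dualComplex A U).homology n) := by
  obtain ⟨_, b, hb⟩ := hbdd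
  intro n
  set t := (b + n + 1).toNat
  have hann : ∏ r ∈ Finset.range t, Module.annihilator A (U.homology (b - r)) ≤
      Module.annihilator A ((dualComplex A U).homology n) :=
    Ideal.prod_le_of_forall_prod_mem _ _ _ fun a ha =>
      (CochainComplex.isNullHomotopicSMulAbove_prod (fun i hi => hb i (Or.inr hi)) hproj a t
        ha).mem_annihilator_homology_dualComplex (by omega)
  have : IsArtinian A (A ⧸ ∏ r ∈ Finset.range t, Module.annihilator A (U.homology (b - r))) := by
    refine isArtinian_quotient_prod _ _ fun r _ => ?_
    have := hfg (b - r)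
    have := (isFiniteLength_iff_isNoetherian_isArtinian.1 (hfl (b - r))).2
    exact isArtinian_quotient_annihilator
  have := hfg (-n)
  have : IsNoetherian A ((dualComplex A U).X n) :=
    inferInstanceAs (IsNoetherian A (U.X (-n) →ₗ[A] A))
  exact isFiniteLength_iff_isNoetherian_isArtinian.2
    ⟨inferInstance, IsArtinian.of_le_annihilator hann⟩
end

section
/- Let C be a Krull–Schmidt triangulated category with shift Σ. Let s : N → E → M →^h ΣN be a triangle with N indecomposable and h ≠ 0, and let θ : s → s be a morphism of triangles with θ_M = 1_M. Then θ is an isomorphism of triangles. -/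
open CategoryTheory Limits Pretriangulated

/-- An object of an additive category is indecomposable if it is nonzero and admits no
nontrivial direct sum decomposition. -/
def IndecomposableObj {C : Type*} [Category C] [Preadditive C] [HasZeroObject C]
    [HasBinaryBiproducts C] (X : C) : Prop :=
  ¬ IsZero X ∧ ∀ Y Z : C, Nonempty (X ≅ Y ⊞ Z) → IsZero Y ∨ IsZero Z

/-- let `C` be a Krull–Schmidt triangulated category, `s : N → E → M → ΣN`
a (distinguished) triangle with `N` indecomposable and `h = mor₃ ≠ 0`, and `θ : s ⟶ s` a
morphism of triangles with `θ_M = 𝟙 M`. Then `θ` is an isomorphism of triangles. -/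
theorem triangle_endo_iso_of_id_on_M
    (C : Type*) [Category C] [Preadditive C] [HasZeroObject C] [HasBinaryBiproducts C]
    [HasFiniteBiproducts C] [HasShift C ℤ] [∀ n : ℤ, (shiftFunctor C n).Additive]
    [Pretriangulated C]
    -- `C` is a Krull–Schmidt category:
    (hKS : ∀ X : C, ∃ (n : ℕ) (Y : Fin n → C),
      (∀ i, IsLocalRing (End (Y i))) ∧ Nonempty (X ≅ ⨁ Y))
    (hKS' : ∀ X : C, IndecomposableObj X → IsLocalRing (End X))
    (T : Triangle C) (hT : T ∈ distTriang C)
    (hN : IndecomposableObj T.obj₁)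
    (hh : T.mor₃ ≠ 0)
    (θ : T ⟶ T) (hθ : θ.hom₃ = 𝟙 T.obj₃) :
    IsIso θ := by
  haveI : IsLocalRing (End T.obj₁) := hKS' _ hN
  have hu : IsIso θ.hom₁ := by
    rw [← isUnit_iff_isIso]
    set a : End T.obj₁ := θ.hom₁ with ha
    rcases IsLocalRing.isUnit_or_isUnit_of_add_one
      (a := a) (b := 1 - a) (by abel) with h | h
    · exact h
    · exfalso
      apply hh
      have hiso : IsIso ((1 : End T.obj₁) - a) := (isUnit_iff_isIso _).1 h
      have hc : T.mor₃ ≫ (shiftFunctor C (1 : ℤ)).map ((1 : End T.obj₁) - a) = 0 := by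
        have := θ.comm₃
        rw [hθ, Category.id_comp] at this
        show T.mor₃ ≫ (shiftFunctor C (1 : ℤ)).map (𝟙 T.obj₁ - θ.hom₁) = 0
        rw [Functor.map_sub, Preadditive.comp_sub, CategoryTheory.Functor.map_id _ _, Category.comp_id, this,
          sub_self]
      haveI : IsIso ((shiftFunctor C (1 : ℤ)).map ((1 : End T.obj₁) - a)) :=
        inferInstance
      simpa using hc =≫ inv ((shiftFunctor C (1 : ℤ)).map ((1 : End T.obj₁) - a))
  haveI : IsIso θ.hom₃ := by rw [hθ]; infer_instance
  haveI : IsIso θ.hom₂ := isIso₂_of_isIso₁₃ θ hT hT hu ‹_›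
  exact Triangle.isIso_of_isIsos θ hu ‹_› ‹_›
end

section
/- Let (A,m) be a Noetherian local ring, U a bounded-above complex of finitely generated projective A-modules, V ⊆ U a subcomplex with V^n a direct summand of U^n for all n and V^n = U^n for all n ≥ m. Let W be a bounded-above complex of finitely generated projectives with H^n(W) = 0 for all n ≤ m. If g : U → W is a chain map whose restriction to V is null-homotopic, then g itself is null-homotopic. -/
/-!
Above `m` the map `i` is an isomorphism, so the given null-homotopy of `i ≫ g` transports to a
family `s` satisfying `g = d s + s d` in all degrees `≥ m`. Going down one degree `n < m`, the
defect `g_n - d s_{n+1}` is killed by `d`, so by exactness of `W` at `n` and projectivity of `U^n`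
it lifts through `d : W^{n-1} → W^n`; replacing `s_n` by that lift gives the equation in degree
`n` without touching higher degrees. Each component is modified only once, so the iteration
converges to an honest null-homotopy.
-/

open CategoryTheory Limits

theorem Int.exists_forall_le_of_extend_downward {β : ℤ → Type*} (P : (∀ p, β p) → ℤ → Prop)
    (hP : ∀ s t n, (∀ p, n ≤ p → s p = t p) → P s n → P t n) {m : ℤ} {s₀ : ∀ p, β p}
    (h₀ : P s₀ m) (extend : ∀ n < m, ∀ s, P s (n + 1) → ∃ t, P t n ∧ ∀ p ≠ n, t p = s p) :
    ∃ s, ∀ n ≤ m, P s n := by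
  choose ext hext hagree using extend
  -- `seq k` is the family after `k` extension steps; its `p`-th entry is final once `k ≥ m - p`.
  let seq : ∀ k : ℕ, {s // P s (m - k)} := fun k => Nat.rec ⟨s₀, by simpa using h₀⟩
    (fun k s => ⟨ext (m - k - 1) (by omega) s.1 (by simpa using s.2), by
      simpa [sub_sub] using hext (m - k - 1) (by omega) s.1 (by simpa using s.2)⟩) k
  have seq_succ (k : ℕ) (p : ℤ) (hp : p ≠ m - k - 1) : (seq (k + 1)).1 p = (seq k).1 p :=
    hagree _ _ _ _ p hp
  have seq_stable (p : ℤ) (k : ℕ) (hk : (m - p).toNat ≤ k) :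
      (seq k).1 p = (seq (m - p).toNat).1 p := by
    induction k, hk using Nat.le_induction with
    | base => rfl
    | succ k hk ih => rw [seq_succ k p (by omega), ih]
  refine ⟨fun p => (seq (m - p).toNat).1 p, fun n hn => ?_⟩
  have hseq : P (seq (m - n).toNat).1 n := by
    convert (seq (m - n).toNat).2
    omega
  exact hP _ _ n (fun p hp => seq_stable p _ (by omega)) hseq

namespace CochainComplex

variable {C : Type*} [Category C]

section Preadditive

variable [Preadditive C] {K L : CochainComplex C ℤ}

def IsNullHomotopyFrom (f : K ⟶ L) (s : ∀ p q, K.X p ⟶ L.X q) (n : ℤ) : Prop :=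
  ∀ k, n ≤ k → f.f k = K.d k (k + 1) ≫ s (k + 1) k + s k (k - 1) ≫ L.d (k - 1) k

variable {f : K ⟶ L} {s t : ∀ p q, K.X p ⟶ L.X q} {n : ℤ}

theorem IsNullHomotopyFrom.congr (hs : IsNullHomotopyFrom f s n)
    (hst : ∀ p, n ≤ p → s p = t p) : IsNullHomotopyFrom f t n := fun k hk => by
  rw [← hst k hk, ← hst (k + 1) (by omega)]
  exact hs k hk

theorem _root_.Homotopy.isNullHomotopyFrom (h : Homotopy f 0) (n : ℤ) :
    IsNullHomotopyFrom f h.hom n := fun k _ => by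
  simpa [dNext_eq h.hom (show (ComplexShape.up ℤ).Rel k (k + 1) from rfl),
    prevD_eq h.hom (show (ComplexShape.up ℤ).Rel (k - 1) k by simp)] using h.comm k

noncomputable def homotopyZeroOfIsNullHomotopyFrom (hs : ∀ n, IsNullHomotopyFrom f s n) :
    Homotopy f 0 :=
  (Homotopy.ofEq (by
    ext k
    rw [Homotopy.nullHomotopicMap'_f (show (ComplexShape.up ℤ).Rel (k - 1) k by simp) rfl]
    exact hs k k le_rfl)).trans (Homotopy.nullHomotopy' fun p q _ => s p q)

theorem exists_isNullHomotopyFrom_of_homotopy_comp {K' : CochainComplex C ℤ} (i : K' ⟶ K)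
    {m : ℤ} (hi : ∀ n, m ≤ n → IsIso (i.f n)) (h : Homotopy (i ≫ f) 0) :
    ∃ s, IsNullHomotopyFrom f s m := by
  refine ⟨fun p q => if hp : m ≤ p then @inv _ _ _ _ (i.f p) (hi p hp) ≫ h.hom p q else 0,
    fun k hk => ?_⟩
  have := hi k hk
  have := hi (k + 1) (by omega)
  dsimp only
  rw [dif_pos hk, dif_pos (by omega), ← cancel_epi (i.f k), ← HomologicalComplex.comp_f,
    h.isNullHomotopyFrom m k hk]
  simp [HomologicalComplex.Hom.comm_assoc]

end Preadditive

theorem IsNullHomotopyFrom.extend [Abelian C] {K L : CochainComplex C ℤ} {f : K ⟶ L}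
    {s : ∀ p q, K.X p ⟶ L.X q} {n : ℤ} (hs : IsNullHomotopyFrom f s (n + 1))
    (hL : L.ExactAt n) [Projective (K.X n)] :
    ∃ t, IsNullHomotopyFrom f t n ∧ ∀ p ≠ n, t p = s p := by
  set φ := f.f n - K.d n (n + 1) ≫ s (n + 1) n
  have hφ : φ ≫ L.d n (n + 1) = 0 := by
    have hsn := hs (n + 1) le_rfl
    rw [add_sub_cancel_right] at hsn
    simp [φ, hsn]
  have hex := (L.exactAt_iff' (n - 1) n (n + 1) (by simp) (by simp)).1 hL
  obtain ⟨u, hu⟩ : ∃ u : K.X n ⟶ L.X (n - 1), u ≫ L.d (n - 1) n = φ :=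
    ⟨hex.liftFromProjective φ hφ, hex.liftFromProjective_comp φ hφ⟩
  refine ⟨Function.update s n (Function.update (s n) (n - 1) u),
    fun k hk => ?_, fun p hp => Function.update_of_ne hp _ _⟩
  obtain rfl | hk := hk.eq_or_lt
  · rw [Function.update_of_ne (by omega), Function.update_self, Function.update_self, hu,
      add_sub_cancel]
  · rw [Function.update_of_ne (by omega), Function.update_of_ne (by omega)]
    exact hs k (by omega)

end CochainComplex

theorem extend_null_homotopy_general
    (A : Type) [CommRing A]
    (U V W : CochainComplex (ModuleCat.{0} A) ℤ)
    (hprojU : ∀ n : ℤ, Module.Projective A (U.X n))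
    (m : ℤ)
    (i : V ⟶ U)
    -- `V^n = U^n` for `n ≥ m`:
    (heq : ∀ n : ℤ, m ≤ n → IsIso (i.f n))
    -- `H^n(W) = 0` for `n ≤ m`:
    (hW : ∀ n : ℤ, n ≤ m → IsZero (W.homology n))
    (g : U ⟶ W)
    (hg : Nonempty (Homotopy (i ≫ g) 0)) :
    Nonempty (Homotopy g 0) := by
  obtain ⟨h⟩ := hg
  obtain ⟨s₀, hs₀⟩ := CochainComplex.exists_isNullHomotopyFrom_of_homotopy_comp i heq h
  obtain ⟨s, hs⟩ := Int.exists_forall_le_of_extend_downward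
    (CochainComplex.IsNullHomotopyFrom g) (fun _ _ _ hst ht => ht.congr hst) hs₀
    fun n hn t ht => by
      have := hprojU n
      exact ht.extend ((W.exactAt_iff_isZero_homology n).2 (hW n hn.le))
  exact ⟨CochainComplex.homotopyZeroOfIsNullHomotopyFrom fun k l hl =>
    hs (min k m) (min_le_right _ _) l (by omega)⟩

/-- extension of null-homotopies. `(A, m)` Noetherian local, `U` a
bounded-above complex of finitely generated projective `A`-modules, `V ⊆ U` a subcomplex
(given by a degreewise split monomorphism `i : V ⟶ U`) with `V^n = U^n` for `n ≥ m`,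
and `W` bounded above with `H^n(W) = 0` for `n ≤ m`. If `g : U ⟶ W` restricts to a
null-homotopic map on `V`, then `g` is null-homotopic. -/
theorem extend_null_homotopy
    (A : Type) [CommRing A] [IsNoetherianRing A] [IsLocalRing A]
    (U V W : CochainComplex (ModuleCat.{0} A) ℤ)
    (hbddU : ∃ N : ℤ, ∀ n : ℤ, N < n → IsZero (U.X n))
    (hbddV : ∃ N : ℤ, ∀ n : ℤ, N < n → IsZero (V.X n))
    (hbddW : ∃ N : ℤ, ∀ n : ℤ, N < n → IsZero (W.X n))
    (hfgU : ∀ n : ℤ, Module.Finite A (U.X n)) (hprojU : ∀ n : ℤ, Module.Projective A (U.X n))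
    (hfgV : ∀ n : ℤ, Module.Finite A (V.X n)) (hprojV : ∀ n : ℤ, Module.Projective A (V.X n))
    (hfgW : ∀ n : ℤ, Module.Finite A (W.X n)) (hprojW : ∀ n : ℤ, Module.Projective A (W.X n))
    (m : ℤ)
    (i : V ⟶ U)
    -- `V^n` is a direct summand of `U^n` for every `n`:
    (hsplit : ∀ n : ℤ, ∃ p : U.X n ⟶ V.X n, i.f n ≫ p = 𝟙 (V.X n))
    -- `V^n = U^n` for `n ≥ m`:
    (heq : ∀ n : ℤ, m ≤ n → IsIso (i.f n))
    -- `H^n(W) = 0` for `n ≤ m`: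
    (hW : ∀ n : ℤ, n ≤ m → IsZero (W.homology n))
    (g : U ⟶ W)
    (hg : Nonempty (Homotopy (i ≫ g) 0)) :
    Nonempty (Homotopy g 0) :=
  extend_null_homotopy_general A U V W hprojU m i heq hW g hg
end
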